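/- Tractability of RQE in n-player games (aggregate risk): assume each penalty function D_i is jointly convex and continuous in both of its arguments, each regularizer ν_i is continuous and strictly convex, and there are parameters ξ_{i,j} ≥ 0 (for i ≠ j) such that for every fixed p_i ∈ P_{−i} the map π_{−i} ↦ D_i(p_i, π_{−i}) − Σ_{j≠i} ξ_{i,j} ν_j(π_j) is concave. If ε_i ≥ Σ_{j≠i} ξ_{j,i} for every i = 1,…,n, then for any coarse correlated equilibrium σ of the 2n-player game with these parameters, the expected marginal π̂ = E_σ[π] ∈ P is a risk-adjusted quantal response equilibrium of the risk-adjusted n-player game with losses f_i^{ε_i}(π_i, π_{−i}) = sup_{p ∈ P_{−i}} ( −π_iᵀ R_i p − D_i(p, π_{−i}) ) + ε_i ν_i(π_i). -/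

import Mathlib

open Finset MeasureTheory

/-- The space of (concatenations of) opponents' strategy profiles of player `i`. -/
abbrev OppProfile (n : ℕ) (A : Fin n → ℕ) (i : Fin n) : Type :=
  ∀ j : {j : Fin n // j ≠ i}, Fin (A j.1) → ℝ

/-- `P_{−i} = ∏_{j ≠ i} Δ_{A_j}`. -/
def OppSimplex (n : ℕ) (A : Fin n → ℕ) (i : Fin n) : Set (OppProfile n A i) :=
  {p | ∀ j, p j ∈ stdSimplex ℝ (Fin (A j.1))}

/-- Index set for the concatenation `ℝ^{A_{−i}}`, `A_{−i} = Σ_{j≠i} A_j`. -/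
abbrev OppIdx (n : ℕ) (A : Fin n → ℕ) (i : Fin n) : Type :=
  Σ j : {j : Fin n // j ≠ i}, Fin (A j.1)

/-- The bilinear pairing `π_iᵀ R_i p`. -/
def bilin (n : ℕ) (A : Fin n → ℕ) (i : Fin n)
    (R : Fin (A i) → OppIdx n A i → ℝ) (x : Fin (A i) → ℝ) (p : OppProfile n A i) : ℝ :=
  ∑ a, ∑ b : OppIdx n A i, x a * R a b * p b.1 b.2

/-- The restriction `π_{−i}`. -/
def restr (n : ℕ) (A : Fin n → ℕ) (π : ∀ j, Fin (A j) → ℝ) (i : Fin n) :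
    OppProfile n A i := fun j => π j.1

/-- Regularized aggregate risk-averse loss `f_i^{ε_i}`. -/
noncomputable def regLoss (n : ℕ) (A : Fin n → ℕ)
    (R : ∀ i : Fin n, Fin (A i) → OppIdx n A i → ℝ)
    (D : ∀ i : Fin n, OppProfile n A i → OppProfile n A i → ℝ)
    (ν : ∀ i : Fin n, (Fin (A i) → ℝ) → ℝ) (ε : Fin n → ℝ)
    (i : Fin n) (π : ∀ j, Fin (A j) → ℝ) : ℝ :=
  sSup ((fun p => -(bilin n A i (R i) (π i) p) - D i p (restr n A π i)) ''
    OppSimplex n A i) + ε i * ν i (π i)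

/-- Loss `J_i` of the `i`-th original player in the auxiliary `2n`-player game. -/
noncomputable def auxJ (n : ℕ) (A : Fin n → ℕ)
    (R : ∀ i : Fin n, Fin (A i) → OppIdx n A i → ℝ)
    (D : ∀ i : Fin n, OppProfile n A i → OppProfile n A i → ℝ)
    (ν : ∀ i : Fin n, (Fin (A i) → ℝ) → ℝ) (ε : Fin n → ℝ)
    (i : Fin n) (π : ∀ j, Fin (A j) → ℝ) (p : ∀ j, OppProfile n A j) : ℝ :=
  -(bilin n A i (R i) (π i) (p i)) - D i (p i) (restr n A π i) + ε i * ν i (π i)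

/-- Loss `J̄_i` of the `i`-th adversary in the auxiliary `2n`-player game. -/
noncomputable def auxJbar (n : ℕ) (A : Fin n → ℕ)
    (R : ∀ i : Fin n, Fin (A i) → OppIdx n A i → ℝ)
    (D : ∀ i : Fin n, OppProfile n A i → OppProfile n A i → ℝ)
    (ν : ∀ i : Fin n, (Fin (A i) → ℝ) → ℝ) (ξ : Fin n → Fin n → ℝ)
    (i : Fin n) (π : ∀ j, Fin (A j) → ℝ) (p : ∀ j, OppProfile n A j) : ℝ :=
  bilin n A i (R i) (π i) (p i) + D i (p i) (restr n A π i)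
    - ∑ j ∈ Finset.univ.erase i, ξ i j * ν j (π j)

section helpers

/-- Tietze extension helper. -/
lemma exists_cont_ext {X : Type*} [TopologicalSpace X] [NormalSpace X] {s : Set X}
    (hs : IsClosed s) (f : X → ℝ) (hf : ContinuousOn f s) :
    ∃ g : X → ℝ, Continuous g ∧ ∀ x ∈ s, g x = f x := by
  obtain ⟨g, hg⟩ := ContinuousMap.exists_restrict_eq hs ⟨s.restrict f, hf.restrict⟩
  refine ⟨g, g.continuous, fun x hx => ?_⟩
  have := congrFun (congrArg ContinuousMap.toFun hg) ⟨x, hx⟩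
  exact this

lemma integrable_of_continuous_ae_compact {α E : Type*} [MeasurableSpace α]
    [TopologicalSpace α] [OpensMeasurableSpace α] [SecondCountableTopology α] [NormedAddCommGroup E]
    {μ : Measure α} [IsFiniteMeasure μ] {K : Set α} (hK : IsCompact K)
    (hae : ∀ᵐ x ∂μ, x ∈ K) {f : α → E} (hf : Continuous f) : Integrable f μ := by
  obtain ⟨C, hC⟩ := hK.exists_bound_of_continuousOn hf.continuousOn
  exact Integrable.mono' (integrable_const C) hf.aestronglyMeasurable
    (hae.mono fun x hx => hC x hx)

lemma integral_pi_apply {α ι : Type*} [MeasurableSpace α] {μ : Measure α} [Fintype ι]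
    {φ : ι → Type*} [∀ i, NormedAddCommGroup (φ i)] [∀ i, NormedSpace ℝ (φ i)]
    [∀ i, CompleteSpace (φ i)]
    {g : α → ∀ i, φ i} (hg : Integrable g μ) (i : ι) :
    (∫ x, g x ∂μ) i = ∫ x, g x i ∂μ := by
  exact ((ContinuousLinearMap.proj (R := ℝ) (φ := φ) i).integral_comp_comm hg).symm

end helpers

section facts
variable {n : ℕ} {A : Fin n → ℕ} {i : Fin n}

lemma oppSimplex_eq : OppSimplex n A i = (Set.univ : Set {j : Fin n // j ≠ i}).pi (fun j => stdSimplex ℝ (Fin (A j.1))) := by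
  ext p; simp [OppSimplex, Set.mem_pi]

lemma isClosed_oppSimplex : IsClosed (OppSimplex n A i) := by
  rw [oppSimplex_eq]; exact isClosed_set_pi fun j _ => isClosed_stdSimplex _ _

lemma convex_oppSimplex : Convex ℝ (OppSimplex n A i) := by
  rw [oppSimplex_eq]; exact convex_pi fun j _ => convex_stdSimplex ℝ _

lemma isCompact_oppSimplex : IsCompact (OppSimplex n A i) := by
  rw [oppSimplex_eq]; exact isCompact_univ_pi fun j => isCompact_stdSimplex _ _

lemma restr_update (π : ∀ j, Fin (A j) → ℝ) (x : Fin (A i) → ℝ) :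
    restr n A (Function.update π i x) i = restr n A π i := by
  funext j
  exact Function.update_of_ne j.2 _ _

lemma restr_mem {π : ∀ j, Fin (A j) → ℝ} (h : ∀ j, π j ∈ stdSimplex ℝ (Fin (A j))) :
    restr n A π i ∈ OppSimplex n A i := fun j => h j.1

lemma bilin_continuous (R : Fin (A i) → OppIdx n A i → ℝ) :
    Continuous (fun q : (Fin (A i) → ℝ) × OppProfile n A i => bilin n A i R q.1 q.2) := by
  unfold bilin
  fun_prop

lemma bilin_continuous₂ {X : Type*} [TopologicalSpace X] (R : Fin (A i) → OppIdx n A i → ℝ)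
    {f : X → Fin (A i) → ℝ} {g : X → OppProfile n A i}
    (hf : Continuous f) (hg : Continuous g) :
    Continuous fun x => bilin n A i R (f x) (g x) := by
  unfold bilin
  fun_prop

lemma sum_erase_eq_subtype (g : Fin n → ℝ) :
    ∑ j ∈ Finset.univ.erase i, g j = ∑ j : {j : Fin n // j ≠ i}, g j.1 := by
  rw [Finset.sum_subtype (p := fun j => j ≠ i) _ (by simp) g]

end facts

section bilinint
variable {n : ℕ} {A : Fin n → ℕ} {i : Fin n} {α : Type*} [MeasurableSpace α] {μ : MeasureTheory.Measure α}

lemma integral_bilin_left (R : Fin (A i) → OppIdx n A i → ℝ) {g : α → Fin (A i) → ℝ}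
    (hg : Integrable g μ) (p : OppProfile n A i) :
    ∫ z, bilin n A i R (g z) p ∂μ = bilin n A i R (∫ z, g z ∂μ) p := by
  have hga : ∀ a, Integrable (fun z => g z a) μ := fun a =>
    (ContinuousLinearMap.proj (R := ℝ) a).integrable_comp hg
  unfold bilin
  rw [integral_finset_sum _ (fun a _ => integrable_finset_sum _
    (fun b _ => ((hga a).mul_const _).mul_const _))]
  refine Finset.sum_congr rfl fun a _ => ?_
  rw [integral_finset_sum _ (fun b _ => ((hga a).mul_const _).mul_const _)]
  refine Finset.sum_congr rfl fun b _ => ?_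
  simp_rw [mul_assoc]
  rw [MeasureTheory.integral_mul_const, integral_pi_apply hg]

lemma integral_bilin_right (R : Fin (A i) → OppIdx n A i → ℝ) (x : Fin (A i) → ℝ)
    {g : α → OppProfile n A i} (hg : Integrable g μ) :
    ∫ z, bilin n A i R x (g z) ∂μ = bilin n A i R x (∫ z, g z ∂μ) := by
  have hgb : ∀ j, Integrable (fun z => g z j) μ := fun j =>
    (ContinuousLinearMap.proj (R := ℝ) j).integrable_comp hg
  have hgb2 : ∀ b : OppIdx n A i, Integrable (fun z => g z b.1 b.2) μ := fun b =>
    (ContinuousLinearMap.proj (R := ℝ) b.2).integrable_comp (hgb b.1)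
  unfold bilin
  rw [integral_finset_sum _ (fun a _ => integrable_finset_sum _
    (fun b _ => (hgb2 b).const_mul _))]
  refine Finset.sum_congr rfl fun a _ => ?_
  rw [integral_finset_sum _ (fun b _ => (hgb2 b).const_mul _)]
  refine Finset.sum_congr rfl fun b _ => ?_
  rw [MeasureTheory.integral_const_mul, ← integral_pi_apply (hgb b.1) b.2,
    ← integral_pi_apply hg b.1]
end bilinint

set_option maxHeartbeats 2000000 in
/-- **Tractability of RQE in `n`-player games (aggregate risk).**
Suppose each penalty `D_i` is jointly convex and continuous, each regularizer `ν_i` is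
continuous and strictly convex, and parameters `ξ_{i,j} ≥ 0` make
`π_{−i} ↦ D_i(p_i, π_{−i}) − Σ_{j≠i} ξ_{i,j} ν_j(π_j)` concave for every fixed `p_i`.
If `ε_i ≥ Σ_{j≠i} ξ_{j,i}` for every `i`, then for any coarse correlated equilibrium `σ`
of the `2n`-player game, the expected marginals `pih_i = E_σ[π_i]` constitute an RQE of
the risk-adjusted `n`-player game. -/
theorem rqe_tractable_n_player_aggregate
    (n : ℕ) (hn : 2 ≤ n) (A : Fin n → ℕ) (hA : ∀ i, 1 ≤ A i)
    (R : ∀ i : Fin n, Fin (A i) → OppIdx n A i → ℝ)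
    (D : ∀ i : Fin n, OppProfile n A i → OppProfile n A i → ℝ)
    (ν : ∀ i : Fin n, (Fin (A i) → ℝ) → ℝ)
    (ε : Fin n → ℝ) (ξ : Fin n → Fin n → ℝ)
    (hDconv : ∀ i, ConvexOn ℝ (OppSimplex n A i ×ˢ OppSimplex n A i)
      (fun q : OppProfile n A i × OppProfile n A i => D i q.1 q.2))
    (hDcont : ∀ i, ContinuousOn (fun q : OppProfile n A i × OppProfile n A i => D i q.1 q.2)
      (OppSimplex n A i ×ˢ OppSimplex n A i))
    (hνcont : ∀ i, ContinuousOn (ν i) (stdSimplex ℝ (Fin (A i))))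
    (hνconv : ∀ i, StrictConvexOn ℝ (stdSimplex ℝ (Fin (A i))) (ν i))
    (hε : ∀ i, 0 < ε i) (hξ : ∀ i j, i ≠ j → 0 ≤ ξ i j)
    (hconc : ∀ i, ∀ pp ∈ OppSimplex n A i,
      ConcaveOn ℝ (OppSimplex n A i)
        (fun q : OppProfile n A i =>
          D i pp q - ∑ j : {j : Fin n // j ≠ i}, ξ i j.1 * ν j.1 (q j)))
    (hεξ : ∀ i, (∑ j ∈ Finset.univ.erase i, ξ j i) ≤ ε i)
    -- σ is a CCE of the 2n-player game:
    (σ : Measure ((∀ j, Fin (A j) → ℝ) × (∀ j, OppProfile n A j)))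
    [IsProbabilityMeasure σ]
    (hsupp : ∀ᵐ z ∂σ, (∀ j, z.1 j ∈ stdSimplex ℝ (Fin (A j))) ∧
      (∀ j, z.2 j ∈ OppSimplex n A j))
    (hCCE₁ : ∀ i : Fin n, ∀ x ∈ stdSimplex ℝ (Fin (A i)),
      (∫ z, auxJ n A R D ν ε i z.1 z.2 ∂σ)
        ≤ ∫ z, auxJ n A R D ν ε i (Function.update z.1 i x) z.2 ∂σ)
    (hCCE₂ : ∀ i : Fin n, ∀ pp ∈ OppSimplex n A i,
      (∫ z, auxJbar n A R D ν ξ i z.1 z.2 ∂σ)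
        ≤ ∫ z, auxJbar n A R D ν ξ i z.1 (Function.update z.2 i pp) ∂σ) :
    -- the expected marginals form an RQE
    (∀ j, (∫ z, z.1 j ∂σ) ∈ stdSimplex ℝ (Fin (A j))) ∧
    (∀ i : Fin n, ∀ x ∈ stdSimplex ℝ (Fin (A i)),
      regLoss n A R D ν ε i (fun j => ∫ z, z.1 j ∂σ)
        ≤ regLoss n A R D ν ε i (Function.update (fun j => ∫ z, z.1 j ∂σ) i x)) := by

  classical
  -- abbreviations
  set pih : ∀ j, Fin (A j) → ℝ := fun j => ∫ z, z.1 j ∂σ with hpihdef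
  set ph : ∀ i : Fin n, OppProfile n A i := fun i => ∫ z, z.2 i ∂σ with hphdef
  have hKcomp : IsCompact ((Set.univ.pi fun j => stdSimplex ℝ (Fin (A j))) ×ˢ
      (Set.univ.pi fun j => OppSimplex n A j)) :=
    (isCompact_univ_pi fun j => isCompact_stdSimplex _ _).prod
      (isCompact_univ_pi fun j => isCompact_oppSimplex)
  have hae : ∀ᵐ z ∂σ, z ∈ ((Set.univ.pi fun j => stdSimplex ℝ (Fin (A j))) ×ˢ
      (Set.univ.pi fun j => OppSimplex n A j)) :=
    hsupp.mono fun z hz => ⟨fun j _ => hz.1 j, fun j _ => hz.2 j⟩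
  -- integrability of coordinates
  have int1 : ∀ j, Integrable (fun z : (∀ j, Fin (A j) → ℝ) × (∀ j, OppProfile n A j) =>
      z.1 j) σ := fun j => integrable_of_continuous_ae_compact hKcomp hae
    ((continuous_apply j).comp continuous_fst)
  have int2 : ∀ j, Integrable (fun z : (∀ j, Fin (A j) → ℝ) × (∀ j, OppProfile n A j) =>
      z.2 j) σ := fun j => integrable_of_continuous_ae_compact hKcomp hae
    ((continuous_apply j).comp continuous_snd)
  have intrestr : ∀ i, Integrable (fun z : (∀ j, Fin (A j) → ℝ) × (∀ j, OppProfile n A j) =>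
      restr n A z.1 i) σ := fun i => integrable_of_continuous_ae_compact hKcomp hae
    (continuous_pi fun j => (continuous_apply j.1).comp continuous_fst)
  -- memberships
  have hpihmem : ∀ j, pih j ∈ stdSimplex ℝ (Fin (A j)) := fun j =>
    (convex_stdSimplex ℝ _).integral_mem (isClosed_stdSimplex _ _)
      (hsupp.mono fun z hz => hz.1 j) (int1 j)
  have hphmem : ∀ i, ph i ∈ OppSimplex n A i := fun i =>
    convex_oppSimplex.integral_mem isClosed_oppSimplex
      (hsupp.mono fun z hz => hz.2 i) (int2 i)
  have hpihrestr : ∀ i, restr n A pih i ∈ OppSimplex n A i := fun i => restr_mem hpihmem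
  have hrestrpih : ∀ i, (∫ z, restr n A z.1 i ∂σ) = restr n A pih i := by
    intro i; funext j
    exact integral_pi_apply (intrestr i) j
  -- integrability of the loss pieces
  have intB : ∀ i, Integrable (fun z : (∀ j, Fin (A j) → ℝ) × (∀ j, OppProfile n A j) =>
      bilin n A i (R i) (z.1 i) (z.2 i)) σ := by
    intro i
    exact integrable_of_continuous_ae_compact hKcomp hae
      (bilin_continuous₂ (R i) (by fun_prop) (by fun_prop))
  have intDd : ∀ i, Integrable (fun z : (∀ j, Fin (A j) → ℝ) × (∀ j, OppProfile n A j) =>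
      D i (z.2 i) (restr n A z.1 i)) σ := by
    intro i
    obtain ⟨G, hGc, hGe⟩ := exists_cont_ext (isClosed_oppSimplex.prod isClosed_oppSimplex)
      (fun q : OppProfile n A i × OppProfile n A i => D i q.1 q.2) (hDcont i)
    refine (integrable_of_continuous_ae_compact hKcomp hae
      (hGc.comp (((continuous_apply i).comp continuous_snd).prodMk
        (continuous_pi fun j => (continuous_apply j.1).comp continuous_fst)))).congr ?_
    exact hsupp.mono fun z hz => hGe _ ⟨hz.2 i, restr_mem hz.1⟩
  have intN : ∀ j, Integrable (fun z : (∀ j, Fin (A j) → ℝ) × (∀ j, OppProfile n A j) =>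
      ν j (z.1 j)) σ := by
    intro j
    obtain ⟨G, hGc, hGe⟩ := exists_cont_ext (isClosed_stdSimplex _ _) (ν j) (hνcont j)
    refine (integrable_of_continuous_ae_compact hKcomp hae
      (hGc.comp ((continuous_apply j).comp continuous_fst))).congr ?_
    exact hsupp.mono fun z hz => hGe _ (hz.1 j)
  -- Jensen for the -D term
  have jensenD : ∀ i, (∫ z, -(D i (z.2 i) (restr n A z.1 i)) ∂σ)
      ≤ -(D i (ph i) (restr n A pih i)) := by
    intro i
    have hg : ConcaveOn ℝ (OppSimplex n A i ×ˢ OppSimplex n A i)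
        (fun q : OppProfile n A i × OppProfile n A i => -(D i q.1 q.2)) := by
      exact (hDconv i).neg
    have hfi : Integrable (fun z : (∀ j, Fin (A j) → ℝ) × (∀ j, OppProfile n A j) =>
        (z.2 i, restr n A z.1 i)) σ := (int2 i).prodMk (intrestr i)
    have hgi : Integrable ((fun q : OppProfile n A i × OppProfile n A i => -(D i q.1 q.2)) ∘
        (fun z : (∀ j, Fin (A j) → ℝ) × (∀ j, OppProfile n A j) =>
          (z.2 i, restr n A z.1 i))) σ := (intDd i).neg
    have h := hg.le_map_integral (hDcont i).neg (isClosed_oppSimplex.prod isClosed_oppSimplex)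
      (hsupp.mono fun z hz => Set.mem_prod.2 ⟨hz.2 i, restr_mem hz.1⟩) hfi hgi
    rw [integral_pair (int2 i) (intrestr i), hrestrpih i] at h
    exact h
  -- Jensen for the hconc term
  have intDiff : ∀ i, ∀ p' ∈ OppSimplex n A i,
      Integrable (fun z : (∀ j, Fin (A j) → ℝ) × (∀ j, OppProfile n A j) =>
        D i p' (restr n A z.1 i) - ∑ j ∈ Finset.univ.erase i, ξ i j * ν j (z.1 j)) σ := by
    intro i p' hp'
    refine Integrable.sub ?_ (integrable_finset_sum _ fun j _ => (intN j).const_mul _)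
    obtain ⟨G, hGc, hGe⟩ := exists_cont_ext (isClosed_oppSimplex.prod isClosed_oppSimplex)
      (fun q : OppProfile n A i × OppProfile n A i => D i q.1 q.2) (hDcont i)
    have hc : Continuous (fun z : (∀ j, Fin (A j) → ℝ) × (∀ j, OppProfile n A j) =>
        G (p', restr n A z.1 i)) :=
      hGc.comp (continuous_const.prodMk
        (continuous_pi fun j => (continuous_apply j.1).comp continuous_fst))
    refine (integrable_of_continuous_ae_compact hKcomp hae hc).congr ?_
    exact hsupp.mono fun z hz => hGe _ ⟨hp', restr_mem hz.1⟩
  have jensenC : ∀ i, ∀ p' ∈ OppSimplex n A i,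
      (∫ z, (D i p' (restr n A z.1 i) - ∑ j ∈ Finset.univ.erase i, ξ i j * ν j (z.1 j)) ∂σ)
        ≤ D i p' (restr n A pih i) - ∑ j ∈ Finset.univ.erase i, ξ i j * ν j (pih j) := by
    intro i p' hp'
    have hsub : ∀ π : ∀ j, Fin (A j) → ℝ, (∑ j ∈ Finset.univ.erase i, ξ i j * ν j (π j))
        = ∑ j : {j : Fin n // j ≠ i}, ξ i j.1 * ν j.1 (restr n A π i j) :=
      fun π => sum_erase_eq_subtype _
    have hconth : ContinuousOn (fun q : OppProfile n A i =>
        D i p' q - ∑ j : {j : Fin n // j ≠ i}, ξ i j.1 * ν j.1 (q j)) (OppSimplex n A i) := by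
      refine ContinuousOn.sub ?_ ?_
      · exact (hDcont i).comp (continuous_const.prodMk continuous_id).continuousOn
          (fun q hq => ⟨hp', hq⟩)
      · refine continuousOn_finset_sum _ fun j _ => ?_
        exact continuousOn_const.mul ((hνcont j.1).comp (continuous_apply j).continuousOn
          (fun q hq => hq j))
    have hginth : Integrable (fun z : (∀ j, Fin (A j) → ℝ) × (∀ j, OppProfile n A j) =>
        D i p' (restr n A z.1 i)
          - ∑ j : {j : Fin n // j ≠ i}, ξ i j.1 * ν j.1 (restr n A z.1 i j)) σ := by
      refine (intDiff i p' hp').congr (Filter.Eventually.of_forall fun z => ?_)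
      dsimp only
      rw [hsub]
    have h := (hconc i p' hp').le_map_integral hconth isClosed_oppSimplex
      (hsupp.mono fun z hz => restr_mem hz.1) (intrestr i) hginth
    rw [hrestrpih i] at h
    calc (∫ z, (D i p' (restr n A z.1 i)
            - ∑ j ∈ Finset.univ.erase i, ξ i j * ν j (z.1 j)) ∂σ)
        = ∫ z, (D i p' (restr n A z.1 i)
            - ∑ j : {j : Fin n // j ≠ i}, ξ i j.1 * ν j.1 (restr n A z.1 i j)) ∂σ := by
          refine integral_congr_ae (Filter.Eventually.of_forall fun z => ?_)
          dsimp only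
          rw [hsub]
      _ ≤ D i p' (restr n A pih i)
            - ∑ j : {j : Fin n // j ≠ i}, ξ i j.1 * ν j.1 (restr n A pih i j) := h
      _ = _ := by rw [← hsub]
  -- Jensen for each ν
  have jensenν : ∀ j, ν j (pih j) ≤ ∫ z, ν j (z.1 j) ∂σ := by
    intro j
    exact (hνconv j).convexOn.map_integral_le (hνcont j) (isClosed_stdSimplex _ _)
      (hsupp.mono fun z hz => hz.1 j) (int1 j) (intN j)
  -- step 1: bound on deviations of the original player
  have step1 : ∀ i, ∀ x ∈ stdSimplex ℝ (Fin (A i)),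
      (∫ z, auxJ n A R D ν ε i (Function.update z.1 i x) z.2 ∂σ)
        ≤ -(bilin n A i (R i) x (ph i)) - D i (ph i) (restr n A pih i) + ε i * ν i x := by
    intro i x hx
    have intbil : Integrable (fun z : (∀ j, Fin (A j) → ℝ) × (∀ j, OppProfile n A j) =>
        bilin n A i (R i) x (z.2 i)) σ :=
      integrable_of_continuous_ae_compact hKcomp hae
        (bilin_continuous₂ (R i) continuous_const (by fun_prop))
    have heq : ∀ z : (∀ j, Fin (A j) → ℝ) × (∀ j, OppProfile n A j),
        auxJ n A R D ν ε i (Function.update z.1 i x) z.2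
          = -(bilin n A i (R i) x (z.2 i)) - D i (z.2 i) (restr n A z.1 i) + ε i * ν i x := by
      intro z
      simp [auxJ, restr_update, Function.update_self]
    rw [show (∫ z, auxJ n A R D ν ε i (Function.update z.1 i x) z.2 ∂σ)
        = ∫ z, (-(bilin n A i (R i) x (z.2 i)) - D i (z.2 i) (restr n A z.1 i)
            + ε i * ν i x) ∂σ
      from integral_congr_ae (Filter.Eventually.of_forall heq)]
    have ib1 : Integrable (fun z : (∀ j, Fin (A j) → ℝ) × (∀ j, OppProfile n A j) =>
        -(bilin n A i (R i) x (z.2 i)) - D i (z.2 i) (restr n A z.1 i)) σ :=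
      intbil.neg.sub (intDd i)
    have ib2 : Integrable (fun z : (∀ j, Fin (A j) → ℝ) × (∀ j, OppProfile n A j) =>
        -(bilin n A i (R i) x (z.2 i))) σ := intbil.neg
    rw [integral_add ib1 (integrable_const _), integral_sub ib2 (intDd i), integral_neg,
      integral_const]
    simp only [measure_univ, probReal_univ, ENNReal.toReal_one, one_smul, smul_eq_mul, one_mul]
    have h1 : (∫ z, bilin n A i (R i) x (z.2 i) ∂σ) = bilin n A i (R i) x (ph i) :=
      integral_bilin_right (R i) x (int2 i)
    have h2 := jensenD i
    rw [integral_neg] at h2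
    rw [h1]
    linarith
  -- step 2: bound on deviations of the adversary
  have step2 : ∀ i, ∀ p' ∈ OppSimplex n A i,
      (∫ z, auxJbar n A R D ν ξ i z.1 (Function.update z.2 i p') ∂σ)
        ≤ bilin n A i (R i) (pih i) p' + D i p' (restr n A pih i)
          - ∑ j ∈ Finset.univ.erase i, ξ i j * ν j (pih j) := by
    intro i p' hp'
    have intbil : Integrable (fun z : (∀ j, Fin (A j) → ℝ) × (∀ j, OppProfile n A j) =>
        bilin n A i (R i) (z.1 i) p') σ :=
      integrable_of_continuous_ae_compact hKcomp hae
        (bilin_continuous₂ (R i) (by fun_prop) continuous_const)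
    have heq : ∀ z : (∀ j, Fin (A j) → ℝ) × (∀ j, OppProfile n A j),
        auxJbar n A R D ν ξ i z.1 (Function.update z.2 i p')
          = bilin n A i (R i) (z.1 i) p'
            + (D i p' (restr n A z.1 i) - ∑ j ∈ Finset.univ.erase i, ξ i j * ν j (z.1 j)) := by
      intro z
      simp only [auxJbar, Function.update_self]
      ring
    rw [show (∫ z, auxJbar n A R D ν ξ i z.1 (Function.update z.2 i p') ∂σ)
        = ∫ z, (bilin n A i (R i) (z.1 i) p'
            + (D i p' (restr n A z.1 i)
              - ∑ j ∈ Finset.univ.erase i, ξ i j * ν j (z.1 j))) ∂σ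
      from integral_congr_ae (Filter.Eventually.of_forall heq)]
    rw [integral_add intbil (intDiff i p' hp'), integral_bilin_left (R i) (int1 i) p']
    linarith [jensenC i p' hp']
  -- step 3: the sum identity
  have intJ : ∀ i, Integrable (fun z : (∀ j, Fin (A j) → ℝ) × (∀ j, OppProfile n A j) =>
      auxJ n A R D ν ε i z.1 z.2) σ := fun i =>
    ((intB i).neg.sub (intDd i)).add ((intN i).const_mul (ε i))
  have intJbar : ∀ i, Integrable (fun z : (∀ j, Fin (A j) → ℝ) × (∀ j, OppProfile n A j) =>
      auxJbar n A R D ν ξ i z.1 z.2) σ := fun i =>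
    ((intB i).add (intDd i)).sub (integrable_finset_sum _ fun j _ => (intN j).const_mul _)
  have step3 : ∀ i, (∫ z, auxJ n A R D ν ε i z.1 z.2 ∂σ)
        + (∫ z, auxJbar n A R D ν ξ i z.1 z.2 ∂σ)
      = ε i * (∫ z, ν i (z.1 i) ∂σ)
        - ∑ j ∈ Finset.univ.erase i, ξ i j * ∫ z, ν j (z.1 j) ∂σ := by
    intro i
    rw [← integral_add (intJ i) (intJbar i)]
    have heq : ∀ z : (∀ j, Fin (A j) → ℝ) × (∀ j, OppProfile n A j),
        auxJ n A R D ν ε i z.1 z.2 + auxJbar n A R D ν ξ i z.1 z.2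
          = ε i * ν i (z.1 i) - ∑ j ∈ Finset.univ.erase i, ξ i j * ν j (z.1 j) := by
      intro z
      unfold auxJ auxJbar
      ring
    rw [show (∫ z, (auxJ n A R D ν ε i z.1 z.2 + auxJbar n A R D ν ξ i z.1 z.2) ∂σ)
        = ∫ z, (ε i * ν i (z.1 i) - ∑ j ∈ Finset.univ.erase i, ξ i j * ν j (z.1 j)) ∂σ
      from integral_congr_ae (Filter.Eventually.of_forall heq)]
    have in1 : Integrable (fun z : (∀ j, Fin (A j) → ℝ) × (∀ j, OppProfile n A j) =>
        ε i * ν i (z.1 i)) σ := (intN i).const_mul _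
    have in2 : Integrable (fun z : (∀ j, Fin (A j) → ℝ) × (∀ j, OppProfile n A j) =>
        ∑ j ∈ Finset.univ.erase i, ξ i j * ν j (z.1 j)) σ :=
      integrable_finset_sum _ fun j _ => (intN j).const_mul _
    rw [integral_sub in1 in2, MeasureTheory.integral_const_mul,
      integral_finset_sum _ (fun j _ => (intN j).const_mul _)]
    simp_rw [MeasureTheory.integral_const_mul]
  -- all CCE inequalities are equalities
  have ha : ∀ i, (∫ z, auxJ n A R D ν ε i z.1 z.2 ∂σ)
      ≤ -(bilin n A i (R i) (pih i) (ph i)) - D i (ph i) (restr n A pih i) + ε i * ν i (pih i) :=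
    fun i => (hCCE₁ i (pih i) (hpihmem i)).trans (step1 i (pih i) (hpihmem i))
  have hb : ∀ i, (∫ z, auxJbar n A R D ν ξ i z.1 z.2 ∂σ)
      ≤ bilin n A i (R i) (pih i) (ph i) + D i (ph i) (restr n A pih i)
        - ∑ j ∈ Finset.univ.erase i, ξ i j * ν j (pih j) :=
    fun i => (hCCE₂ i (ph i) (hphmem i)).trans (step2 i (ph i) (hphmem i))
  have hzero : ∀ i, ((∫ z, auxJ n A R D ν ε i z.1 z.2 ∂σ)
        = -(bilin n A i (R i) (pih i) (ph i)) - D i (ph i) (restr n A pih i) + ε i * ν i (pih i))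
      ∧ ((∫ z, auxJbar n A R D ν ξ i z.1 z.2 ∂σ)
        = bilin n A i (R i) (pih i) (ph i) + D i (ph i) (restr n A pih i)
          - ∑ j ∈ Finset.univ.erase i, ξ i j * ν j (pih j)) := by
    set gg : Fin n → ℝ := fun j => (∫ z, ν j (z.1 j) ∂σ) - ν j (pih j) with hgg
    have hg0 : ∀ j, 0 ≤ gg j := fun j => sub_nonneg.2 (jensenν j)
    have hF : ∀ i, (∫ z, auxJ n A R D ν ε i z.1 z.2 ∂σ)
          + (∫ z, auxJbar n A R D ν ξ i z.1 z.2 ∂σ)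
        - ((-(bilin n A i (R i) (pih i) (ph i)) - D i (ph i) (restr n A pih i)
              + ε i * ν i (pih i))
          + (bilin n A i (R i) (pih i) (ph i) + D i (ph i) (restr n A pih i)
            - ∑ j ∈ Finset.univ.erase i, ξ i j * ν j (pih j)))
        = ε i * gg i - ∑ j ∈ Finset.univ.erase i, ξ i j * gg j := by
      intro i
      rw [step3 i]
      simp only [hgg, mul_sub, Finset.sum_sub_distrib]
      ring
    have hswap : (∑ i, ∑ j ∈ Finset.univ.erase i, ξ i j * gg j)
        = ∑ j, (∑ i ∈ Finset.univ.erase j, ξ i j) * gg j := by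
      simp only [← Finset.filter_ne' Finset.univ, Finset.sum_filter]
      rw [Finset.sum_comm]
      refine Finset.sum_congr rfl fun j _ => ?_
      rw [Finset.sum_mul]
      refine Finset.sum_congr rfl fun i _ => ?_
      by_cases h : i = j
      · simp [h]
      · simp [h, Ne.symm h]
    have hnonpos : ∀ i ∈ Finset.univ,
        ε i * gg i - ∑ j ∈ Finset.univ.erase i, ξ i j * gg j ≤ 0 := by
      intro i _
      rw [← hF i]
      linarith [ha i, hb i]
    have hsum0 : ∑ i, (ε i * gg i - ∑ j ∈ Finset.univ.erase i, ξ i j * gg j) = 0 := by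
      refine le_antisymm (Finset.sum_nonpos hnonpos) ?_
      rw [Finset.sum_sub_distrib, hswap, sub_nonneg]
      exact Finset.sum_le_sum fun j _ => mul_le_mul_of_nonneg_right (hεξ j) (hg0 j)
    intro i
    have hz := (Finset.sum_eq_zero_iff_of_nonpos hnonpos).1 hsum0 i (Finset.mem_univ i)
    rw [← hF i] at hz
    constructor <;> linarith [ha i, hb i]
  -- the sup is attained at ph i
  have hM : ∀ i, IsGreatest
      ((fun p => -(bilin n A i (R i) (pih i) p) - D i p (restr n A pih i)) '' OppSimplex n A i)
      (-(bilin n A i (R i) (pih i) (ph i)) - D i (ph i) (restr n A pih i)) := by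
    intro i
    constructor
    · exact ⟨ph i, hphmem i, rfl⟩
    · rintro y ⟨p', hp', rfl⟩
      have h1 := (hzero i).2 ▸ hCCE₂ i p' hp'
      have h2 := step2 i p' hp'
      have h3 := h1.trans h2
      show -(bilin n A i (R i) (pih i) p') - D i p' (restr n A pih i) ≤ _
      linarith
  -- conclusion
  refine ⟨fun j => hpihmem j, fun i x hx => ?_⟩
  have h5 : regLoss n A R D ν ε i pih
      ≤ -(bilin n A i (R i) x (ph i)) - D i (ph i) (restr n A pih i) + ε i * ν i x := by
    have hr : regLoss n A R D ν ε i pih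
        = -(bilin n A i (R i) (pih i) (ph i)) - D i (ph i) (restr n A pih i)
          + ε i * ν i (pih i) := by
      rw [regLoss, (hM i).csSup_eq]
    rw [hr, ← (hzero i).1]
    exact (hCCE₁ i x hx).trans (step1 i x hx)
  have h6 : -(bilin n A i (R i) x (ph i)) - D i (ph i) (restr n A pih i)
      ≤ sSup ((fun p => -(bilin n A i (R i) x p) - D i p (restr n A pih i)) ''
        OppSimplex n A i) := by
    apply le_csSup
    · apply IsCompact.bddAbove_image isCompact_oppSimplex
      refine ContinuousOn.sub ?_ ?_
      · exact (((bilin_continuous (R i)).comp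
          (continuous_const.prodMk continuous_id)).neg).continuousOn
      · exact (hDcont i).comp (continuous_id.prodMk continuous_const).continuousOn
          (fun p hp => ⟨hp, hpihrestr i⟩)
    · exact ⟨ph i, hphmem i, rfl⟩
  have h7 : regLoss n A R D ν ε i (Function.update pih i x)
      = sSup ((fun p => -(bilin n A i (R i) x p) - D i p (restr n A pih i)) ''
        OppSimplex n A i) + ε i * ν i x := by
    rw [regLoss, Function.update_self, restr_update]
  rw [h7]
  calc regLoss n A R D ν ε i pih
      ≤ -(bilin n A i (R i) x (ph i)) - D i (ph i) (restr n A pih i) + ε i * ν i x := h5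
    _ ≤ _ := by linarith [h6]
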